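/- Let s ≥ 0, let E ⊆ ℝⁿ be ℋ^s_w-measurable with ℋ^s_w(E) < ∞, and let ε > 0. Then there exists ρ > 0, depending only on E and ε, such that for every countable collection of Borel sets {Uᵢ} with 0 < diam_w Uᵢ ≤ ρ for all i, one has ℋ^s_w(E ∩ ⋃ᵢ Uᵢ) < Σᵢ (diam_w Uᵢ)^s + ε. -/

import Mathlib

open MeasureTheory Set ENNReal NNReal

noncomputable section

/-- Points of `ℝⁿ` with the Euclidean norm. -/
abbrev Pt (n : ℕ) := EuclideanSpace ℝ (Fin n)

/-- The action of an `n × n` real matrix on Euclidean space. -/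
def mapp {n : ℕ} (A : Matrix (Fin n) (Fin n) ℝ) (x : Pt n) : Pt n :=
  Matrix.toEuclideanLin A x

/-- A real matrix is expanding if all of its (complex) eigenvalues have modulus `> 1`. -/
def IsExpandingMatrix {n : ℕ} (A : Matrix (Fin n) (Fin n) ℝ) : Prop :=
  ∀ μ ∈ spectrum ℂ (A.map (fun a => (a : ℂ))), 1 < ‖μ‖

/-- The diameter of a set with respect to the pseudo norm `w`. -/
def pdiam {n : ℕ} (w : Pt n → ℝ) (E : Set (Pt n)) : ℝ≥0∞ :=
  ⨆ (x ∈ E) (y ∈ E), ENNReal.ofReal (w (x - y))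

/-- The `δ`-approximation of the `s`-dimensional pseudo Hausdorff measure. -/
def preHw {n : ℕ} (w : Pt n → ℝ) (s δ : ℝ) (E : Set (Pt n)) : ℝ≥0∞ :=
  ⨅ (U : ℕ → Set (Pt n)) (_ : E ⊆ ⋃ i, U i)
    (_ : ∀ i, pdiam w (U i) ≤ ENNReal.ofReal δ), ∑' i, pdiam w (U i) ^ s

/-- The `s`-dimensional pseudo Hausdorff measure w.r.t. the pseudo norm `w`. -/
def Hw {n : ℕ} (w : Pt n → ℝ) (s : ℝ) (E : Set (Pt n)) : ℝ≥0∞ :=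
  ⨆ (δ : ℝ) (_ : 0 < δ), preHw w s δ E

/-- Carathéodory measurability with respect to the outer measure `Hw w s`. -/
def HwMeasurable {n : ℕ} (w : Pt n → ℝ) (s : ℝ) (E : Set (Pt n)) : Prop :=
  ∀ T : Set (Pt n), Hw w s T = Hw w s (T ∩ E) + Hw w s (T \ E)

/-- A pseudo norm associated with the expanding matrix `A`. -/
structure IsPseudoNorm {n : ℕ} (A : Matrix (Fin n) (Fin n) ℝ) (w : Pt n → ℝ) : Prop where
  continuous : Continuous w
  nonneg : ∀ x, 0 ≤ w x
  neg : ∀ x, w (-x) = w x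
  eq_zero_iff : ∀ x, w x = 0 ↔ x = 0
  scaling : ∀ x, w (mapp A x) = |A.det| ^ ((1 : ℝ) / n) * w x
  quasi_triangle : ∃ β > (0 : ℝ), ∀ x y, w (x + y) ≤ β * max (w x) (w y)
  comparable : ∃ C > (0 : ℝ), ∃ α₁ > (0 : ℝ), ∃ α₂ > (0 : ℝ),
    (∀ x : Pt n, 1 < ‖x‖ → C⁻¹ * ‖x‖ ^ α₁ ≤ w x ∧ w x ≤ C * ‖x‖ ^ α₂) ∧
    (∀ x : Pt n, ‖x‖ ≤ 1 → C⁻¹ * ‖x‖ ^ α₂ ≤ w x ∧ w x ≤ C * ‖x‖ ^ α₁)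

/-- The map `f_d(x) = A⁻¹(x + d)` of the self-affine IFS. -/
def fIFS {n : ℕ} (A : Matrix (Fin n) (Fin n) ℝ) (d : Pt n) (x : Pt n) : Pt n :=
  mapp A⁻¹ (x + d)

/-- The open set condition for the IFS `{f_d}_{d ∈ D}`. -/
def OSC {n : ℕ} (A : Matrix (Fin n) (Fin n) ℝ) (D : Finset (Pt n)) : Prop :=
  ∃ V : Set (Pt n), V.Nonempty ∧ IsOpen V ∧ Bornology.IsBounded V ∧
    (⋃ d ∈ D, fIFS A d '' V) ⊆ V ∧
    ∀ d ∈ D, ∀ d' ∈ D, d ≠ d' → fIFS A d '' V ∩ fIFS A d' '' V = ∅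

/-- `K` is the self-affine set (attractor) for the pair `(A, D)`:
a nonempty compact set with `A K = ⋃_{d ∈ D} (K + d)`. -/
def IsSelfAffineSet {n : ℕ} (A : Matrix (Fin n) (Fin n) ℝ) (D : Finset (Pt n))
    (K : Set (Pt n)) : Prop :=
  K.Nonempty ∧ IsCompact K ∧ mapp A '' K = ⋃ d ∈ D, (fun x => x + d) '' K

/-- The set `𝒟_M` of `M`-fold expansions `Σ_{j<M} A^j d_j`. -/
def DsetM {n : ℕ} (A : Matrix (Fin n) (Fin n) ℝ) (D : Finset (Pt n)) (M : ℕ) :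
    Set (Pt n) :=
  {x | ∃ d : Fin M → Pt n, (∀ j, d j ∈ D) ∧ x = ∑ j : Fin M, mapp (A ^ (j : ℕ)) (d j)}

/-- The set `𝒟_∞ = ⋃_{M ≥ 1} 𝒟_M`. -/
def DsetInf {n : ℕ} (A : Matrix (Fin n) (Fin n) ℝ) (D : Finset (Pt n)) : Set (Pt n) :=
  ⋃ (M : ℕ) (_ : 1 ≤ M), DsetM A D M

/-- A set is uniformly discrete if distinct points are uniformly separated. -/
def UniformlyDiscrete {n : ℕ} (S : Set (Pt n)) : Prop :=
  ∃ δ > (0 : ℝ), ∀ x ∈ S, ∀ y ∈ S, x ≠ y → δ < ‖x - y‖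

/-- `σ` is the invariant (self-affine) probability measure of the IFS `{f_d}_{d ∈ D}`. -/
def IsInvariantMeasure {n : ℕ} (A : Matrix (Fin n) (Fin n) ℝ) (D : Finset (Pt n))
    (σ : Measure (Pt n)) : Prop :=
  IsProbabilityMeasure σ ∧
  ∀ f : Pt n → ℝ, Continuous f → HasCompactSupport f →
    ∫ x, f x ∂σ = ((D.card : ℝ))⁻¹ * ∑ d ∈ D, ∫ x, f (fIFS A d x) ∂σ

/-- The measure `μ_M = Σ_{d_0,…,d_{M−1} ∈ 𝒟} δ_{d_0 + A d_1 + ⋯ + A^{M−1} d_{M−1}}`. -/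
def muM {n : ℕ} (A : Matrix (Fin n) (Fin n) ℝ) (D : Finset (Pt n)) (M : ℕ) :
    Measure (Pt n) :=
  ∑ d ∈ (Finset.univ : Finset (Fin M → {x : Pt n // x ∈ D})),
    Measure.dirac (∑ j : Fin M, mapp (A ^ (j : ℕ)) ((d j : Pt n)))

/-- Convolution of two Borel measures on `ℝⁿ`. -/
def mconv {n : ℕ} (μ ν : Measure (Pt n)) : Measure (Pt n) :=
  Measure.map (fun p : Pt n × Pt n => p.1 + p.2) (μ.prod ν)

/-- The upper `s`-density `ℰ⁺_{w,s}(ν)` of a Borel measure `ν` w.r.t. the pseudo norm `w`. -/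
def upperDensity {n : ℕ} (w : Pt n → ℝ) (s : ℝ) (ν : Measure (Pt n)) : ℝ≥0∞ :=
  ⨅ (r : ℝ) (_ : 0 < r),
    ⨆ (U : Set (Pt n)) (_ : IsCompact U) (_ : Convex ℝ U)
      (_ : ENNReal.ofReal r ≤ pdiam w U), ν U / pdiam w U ^ s

/-- The upper convex `s`-density `D^s_{w,c}(E, x)` of `E` at `x` w.r.t. `w`. -/
def upperConvexDensity {n : ℕ} (w : Pt n → ℝ) (s : ℝ) (E : Set (Pt n)) (x : Pt n) :
    ℝ≥0∞ :=
  ⨅ (r : ℝ) (_ : 0 < r),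
    ⨆ (U : Set (Pt n)) (_ : Convex ℝ U) (_ : x ∈ U) (_ : 0 < pdiam w U)
      (_ : pdiam w U ≤ ENNReal.ofReal r), Hw w s (E ∩ U) / pdiam w U ^ s

/-- The pseudo Hausdorff dimension `dim_H^w E = inf {s ≥ 0 : ℋ^s_w(E) = 0}`. -/
def dimHw {n : ℕ} (w : Pt n → ℝ) (E : Set (Pt n)) : ℝ≥0∞ :=
  ⨅ (t : ℝ≥0) (_ : Hw w (t : ℝ) E = 0), (t : ℝ≥0∞)

/-- `𝒱` is a Vitali class for `E` w.r.t. `w`. -/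
def VitaliClass {n : ℕ} (w : Pt n → ℝ) (𝒱 : Set (Set (Pt n))) (E : Set (Pt n)) : Prop :=
  ∀ x ∈ E, ∀ δ : ℝ, 0 < δ →
    ∃ U ∈ 𝒱, x ∈ U ∧ 0 < pdiam w U ∧ pdiam w U ≤ ENNReal.ofReal δ

/-- The composite map `f_𝐢 = f_{i₁} ∘ ⋯ ∘ f_{i_m}` associated with a word of digits. -/
def fWord {n : ℕ} (A : Matrix (Fin n) (Fin n) ℝ) (i : List (Pt n)) (x : Pt n) : Pt n :=
  i.foldr (fun d y => fIFS A d y) x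
/-!
For `s > 0` each `preHw w s δ` is the outer measure generated by the gauge
`V ↦ (diam_w V)^s` on sets of `w`-diameter at most `δ`, so `Hw w s` is an outer measure too.
Since `w`-small vectors are Euclidean-small, sets at positive Euclidean distance cannot meet a
common set of small `w`-diameter: `Hw w s` is a metric outer measure, and Borel sets are
Carathéodory measurable for it. For Borel `B = ⋃ᵢ Uᵢ` this gives
`Hw(E) = Hw(E ∩ B) + Hw(E \ B)`, while covering `E` by the `Uᵢ` together with a cover of `E \ B`
gives `preHw_ρ(E) ≤ Σᵢ (diam_w Uᵢ)^s + Hw(E \ B)`. Choosing `ρ` with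
`Hw(E) < preHw_ρ(E) + ε` and cancelling the finite term `Hw(E \ B)` proves the claim.
The case `s = 0` is void, because `(diam_w U)^0 = 1` even for `U = ∅`, so `Hw w 0 E = ⊤`.
-/

section PseudoHausdorff

variable {n : ℕ} (w : Pt n → ℝ)

lemma pdiam_empty : pdiam w (∅ : Set (Pt n)) = 0 := by simp [pdiam]

lemma ofReal_le_pdiam {V : Set (Pt n)} {x y : Pt n} (hx : x ∈ V) (hy : y ∈ V) :
    ENNReal.ofReal (w (x - y)) ≤ pdiam w V :=
  le_iSup₂_of_le x hx (le_iSup₂_of_le y hy le_rfl)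

lemma preHw_anti {s δ δ' : ℝ} (h : δ ≤ δ') (E : Set (Pt n)) :
    preHw w s δ' E ≤ preHw w s δ E :=
  le_iInf₂ fun U hcov => le_iInf fun hU =>
    iInf₂_le_of_le U hcov <| iInf_le_of_le (fun i => (hU i).trans (ENNReal.ofReal_le_ofReal h))
      le_rfl

lemma preHw_le_Hw {s δ : ℝ} (hδ : 0 < δ) (E : Set (Pt n)) : preHw w s δ E ≤ Hw w s E :=
  le_iSup₂_of_le δ hδ le_rfl

lemma Hw_zero_eq_top (E : Set (Pt n)) : Hw w 0 E = ⊤ := by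
  refine top_unique (le_trans ?_ (preHw_le_Hw w one_pos E))
  refine le_iInf₂ fun U _ => le_iInf fun _ => ?_
  simp only [ENNReal.rpow_zero, ENNReal.tsum_const_eq_top_of_ne_zero one_ne_zero, le_refl]

def preHwGauge (s δ : ℝ) (V : Set (Pt n)) : ℝ≥0∞ :=
  if pdiam w V ≤ ENNReal.ofReal δ then pdiam w V ^ s else ⊤

lemma preHwGauge_empty {s : ℝ} (hs : 0 < s) (δ : ℝ) : preHwGauge w s δ ∅ = 0 := by
  simp [preHwGauge, pdiam_empty, ENNReal.zero_rpow_of_pos hs]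

lemma preHwGauge_eq_top {s δ : ℝ} (hδ : 0 ≤ δ) {V : Set (Pt n)} {x y : Pt n} (hx : x ∈ V)
    (hy : y ∈ V) (hxy : δ < w (x - y)) : preHwGauge w s δ V = ⊤ :=
  if_neg fun hV => hxy.not_ge <|
    (ENNReal.ofReal_le_ofReal_iff hδ).mp ((ofReal_le_pdiam w hx hy).trans hV)

def preHwOuter {s : ℝ} (hs : 0 < s) (δ : ℝ) : OuterMeasure (Pt n) :=
  OuterMeasure.ofFunction (preHwGauge w s δ) (preHwGauge_empty w hs δ)

lemma preHwOuter_apply {s : ℝ} (hs : 0 < s) (δ : ℝ) (E : Set (Pt n)) :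
    preHwOuter w hs δ E = preHw w s δ E := by
  rw [preHwOuter, preHw, OuterMeasure.ofFunction_eq_iInf_mem (P := fun V => pdiam w V ≤ .ofReal δ)
    (preHwGauge w s δ) (preHwGauge_empty w hs δ) (fun V hV => if_neg hV)]
  refine iInf_congr fun U => ?_
  rw [iInf_comm]
  exact iInf_congr fun _ => iInf_congr fun hU => tsum_congr fun i => if_pos (hU i)

def HwOuter {s : ℝ} (hs : 0 < s) : OuterMeasure (Pt n) :=
  ⨆ (δ : ℝ) (_ : 0 < δ), preHwOuter w hs δ

lemma HwOuter_apply {s : ℝ} (hs : 0 < s) (E : Set (Pt n)) : HwOuter w hs E = Hw w s E := by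
  simp only [HwOuter, OuterMeasure.iSup_apply, preHwOuter_apply, Hw]

lemma preHw_le_tsum_add_preHw_diff {s ρ : ℝ} (hs : 0 < s) (U : ℕ → Set (Pt n))
    (hU : ∀ i, pdiam w (U i) ≤ ENNReal.ofReal ρ) (E : Set (Pt n)) :
    preHw w s ρ E ≤ (∑' i, pdiam w (U i) ^ s) + preHw w s ρ (E \ ⋃ i, U i) := by
  simp only [← preHwOuter_apply w hs]
  calc preHwOuter w hs ρ E ≤ preHwOuter w hs ρ ((⋃ i, U i) ∪ (E \ ⋃ i, U i)) :=
        measure_mono fun x hx => by by_cases h : x ∈ ⋃ i, U i <;> simp [h, hx]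
    _ ≤ (∑' i, preHwOuter w hs ρ (U i)) + preHwOuter w hs ρ (E \ ⋃ i, U i) :=
        (measure_union_le _ _).trans (add_le_add (measure_iUnion_le _) le_rfl)
    _ ≤ (∑' i, pdiam w (U i) ^ s) + preHwOuter w hs ρ (E \ ⋃ i, U i) := by
        gcongr with i
        exact (OuterMeasure.ofFunction_le _).trans_eq (if_pos (hU i))

lemma exists_lt_preHw_add {s : ℝ} {E : Set (Pt n)} (hE : Hw w s E ≠ ⊤) {ε : ℝ≥0∞}
    (hε : ε ≠ 0) : ∃ ρ > (0 : ℝ), Hw w s E < preHw w s ρ E + ε := by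
  rcases eq_zero_or_pos (Hw w s E) with hzero | hpos
  · exact ⟨1, one_pos, hzero ▸ (pos_iff_ne_zero.2 hε).trans_le le_add_self⟩
  have hlt : Hw w s E - ε < ⨆ (δ : ℝ) (_ : 0 < δ), preHw w s δ E :=
    ENNReal.sub_lt_self hE hpos.ne' hε
  obtain ⟨ρ, hρ⟩ := lt_iSup_iff.mp hlt
  obtain ⟨hρ, hlt⟩ := lt_iSup_iff.mp hρ
  exact ⟨ρ, hρ, ENNReal.lt_add_of_sub_lt_right (.inl hE) hlt⟩

lemma exists_pos_forall_norm_lt {C α₁ α₂ : ℝ} (hC : 0 < C) (hα₁ : 0 ≤ α₁) (hα₂ : 0 ≤ α₂)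
    (hlarge : ∀ x : Pt n, 1 < ‖x‖ → C⁻¹ * ‖x‖ ^ α₁ ≤ w x)
    (hsmall : ∀ x : Pt n, ‖x‖ ≤ 1 → C⁻¹ * ‖x‖ ^ α₂ ≤ w x) {r : ℝ} (hr : 0 < r) :
    ∃ δ > (0 : ℝ), ∀ x : Pt n, w x ≤ δ → ‖x‖ < r := by
  set r₁ := min r 1
  have hr₁ : 0 < r₁ := lt_min hr one_pos
  have hc : 0 < C⁻¹ * r₁ ^ α₂ := by positivity
  refine ⟨C⁻¹ * r₁ ^ α₂ / 2, half_pos hc, fun x hx => ?_⟩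
  by_contra! hrx
  have hr₁x : r₁ ≤ ‖x‖ := (min_le_left _ _).trans hrx
  have : C⁻¹ * r₁ ^ α₂ ≤ w x := by
    rcases le_or_gt ‖x‖ 1 with hx1 | hx1
    · exact (mul_le_mul_of_nonneg_left (Real.rpow_le_rpow hr₁.le hr₁x hα₂) (by positivity)).trans
        (hsmall x hx1)
    · calc C⁻¹ * r₁ ^ α₂ ≤ C⁻¹ * ‖x‖ ^ α₁ := by
            gcongr
            exact (Real.rpow_le_one hr₁.le (min_le_right _ _) hα₂).trans
              (Real.one_le_rpow hx1.le hα₁)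
        _ ≤ w x := hlarge x hx1
  linarith

lemma HwOuter_isMetric {s : ℝ} (hs : 0 < s)
    (hw_small : ∀ r > (0 : ℝ), ∃ δ > (0 : ℝ), ∀ x : Pt n, w x ≤ δ → ‖x‖ < r) :
    (HwOuter w hs).IsMetric := by
  rintro S T ⟨r, hr, hST⟩
  obtain ⟨r₀, -, hr₀, hr₀r⟩ := ENNReal.lt_iff_exists_real_btwn.mp (pos_iff_ne_zero.2 hr)
  obtain ⟨δ₀, hδ₀, hδ₀r₀⟩ := hw_small r₀ (ENNReal.ofReal_pos.mp hr₀)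
  have hsplit : ∀ δ, 0 < δ → δ ≤ δ₀ →
      preHw w s δ (S ∪ T) = preHw w s δ S + preHw w s δ T := by
    intro δ hδ hδδ₀
    simp only [← preHwOuter_apply w hs]
    refine OuterMeasure.ofFunction_union_of_top_of_nonempty_inter
      fun V ⟨x, hxS, hxV⟩ ⟨y, hyT, hyV⟩ => preHwGauge_eq_top w hδ.le hxV hyV ?_
    by_contra! hxy
    have hxy_small := hδ₀r₀ _ (hxy.trans hδδ₀)
    have hxy_large := hr₀r.trans_le (hST x hxS y hyT)
    rw [edist_dist, dist_eq_norm, ENNReal.ofReal_lt_ofReal_iff'] at hxy_large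
    linarith [hxy_large.1]
  refine le_antisymm (measure_union_le S T) ?_
  simp only [HwOuter_apply, Hw]
  refine ENNReal.biSup_add_biSup_le' ⟨1, one_pos⟩ ⟨1, one_pos⟩ fun δ₁ hδ₁ δ₂ hδ₂ => ?_
  have hδ : 0 < min (min δ₁ δ₂) δ₀ := lt_min (lt_min hδ₁ hδ₂) hδ₀
  refine le_iSup₂_of_le _ hδ ((hsplit _ hδ (min_le_right _ _)).ge.trans' ?_)
  exact add_le_add (preHw_anti w ((min_le_left _ _).trans (min_le_left _ _)) S)
    (preHw_anti w ((min_le_left _ _).trans (min_le_right _ _)) T)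

lemma hwMeasurable_of_measurableSet {s : ℝ} (hs : 0 < s)
    (hw_small : ∀ r > (0 : ℝ), ∃ δ > (0 : ℝ), ∀ x : Pt n, w x ≤ δ → ‖x‖ < r)
    {B : Set (Pt n)} (hB : MeasurableSet B) : HwMeasurable w s B := by
  have hB' : MeasurableSet[(HwOuter w hs).caratheodory] B :=
    (HwOuter_isMetric w hs hw_small).borel_le_caratheodory _ (by rwa [← BorelSpace.measurable_eq])
  intro T
  simpa only [HwOuter_apply] using (OuterMeasure.isCaratheodory_iff _).mp hB' T

end PseudoHausdorff

theorem stmt8_general {n : ℕ} (A : Matrix (Fin n) (Fin n) ℝ)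
    (w : Pt n → ℝ) (hw : IsPseudoNorm A w)
    (s : ℝ) (hs : 0 ≤ s) (E : Set (Pt n))
    (hfin : Hw w s E < ⊤)
    (ε : ℝ) (hε : 0 < ε) :
    ∃ ρ > (0 : ℝ), ∀ U : ℕ → Set (Pt n), (∀ i, MeasurableSet (U i)) →
      (∀ i, 0 < pdiam w (U i) ∧ pdiam w (U i) ≤ ENNReal.ofReal ρ) →
      Hw w s (E ∩ ⋃ i, U i) < (∑' i, pdiam w (U i) ^ s) + ENNReal.ofReal ε := by
  rcases hs.eq_or_lt with rfl | hs
  · exact absurd (Hw_zero_eq_top w E) hfin.ne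
  obtain ⟨C, hC, α₁, hα₁, α₂, hα₂, hlarge, hsmall⟩ := hw.comparable
  have hw_small (r : ℝ) (hr : 0 < r) : ∃ δ > (0 : ℝ), ∀ x : Pt n, w x ≤ δ → ‖x‖ < r :=
    exists_pos_forall_norm_lt w hC hα₁.le hα₂.le (fun x hx => (hlarge x hx).1)
      (fun x hx => (hsmall x hx).1) hr
  obtain ⟨ρ, hρ, hρE⟩ := exists_lt_preHw_add w hfin.ne (ENNReal.ofReal_pos.2 hε).ne'
  refine ⟨ρ, hρ, fun U hU hUρ => ?_⟩
  have hsplit := hwMeasurable_of_measurableSet w hs hw_small (MeasurableSet.iUnion hU) E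
  have hdiff : Hw w s (E \ ⋃ i, U i) ≠ ⊤ :=
    ne_top_of_le_ne_top hfin.ne (hsplit ▸ le_add_self)
  refine (ENNReal.add_lt_add_iff_right hdiff).mp ?_
  calc Hw w s (E ∩ ⋃ i, U i) + Hw w s (E \ ⋃ i, U i) = Hw w s E := hsplit.symm
    _ < preHw w s ρ E + ENNReal.ofReal ε := hρE
    _ ≤ (∑' i, pdiam w (U i) ^ s) + Hw w s (E \ ⋃ i, U i) + ENNReal.ofReal ε := by
        gcongr
        exact (preHw_le_tsum_add_preHw_diff w hs U (fun i => (hUρ i).2) E).trans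
          (add_le_add le_rfl (preHw_le_Hw w hρ _))
    _ = (∑' i, pdiam w (U i) ^ s) + ENNReal.ofReal ε + Hw w s (E \ ⋃ i, U i) :=
        add_right_comm _ _ _

/-- Lemma 4.2: for `ℋ^s_w`-measurable `E` of finite measure and `ε > 0` there is
`ρ > 0` such that any countable collection of Borel sets of `w`-diameter at most `ρ`
satisfies `ℋ^s_w(E ∩ ⋃ᵢ Uᵢ) < Σᵢ (diam_w Uᵢ)^s + ε`. -/
theorem stmt8 {n : ℕ} (hn : 0 < n) (A : Matrix (Fin n) (Fin n) ℝ)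
    (hA : IsExpandingMatrix A)
    (hAnorm : ∀ x : Pt n, ‖x‖ ≤ ‖mapp A x‖)
    (hAeq : ∀ x : Pt n, ‖x‖ = ‖mapp A x‖ → x = 0)
    (w : Pt n → ℝ) (hw : IsPseudoNorm A w)
    (s : ℝ) (hs : 0 ≤ s) (E : Set (Pt n))
    (hE : HwMeasurable w s E) (hfin : Hw w s E < ⊤)
    (ε : ℝ) (hε : 0 < ε) :
    ∃ ρ > (0 : ℝ), ∀ U : ℕ → Set (Pt n), (∀ i, MeasurableSet (U i)) →
      (∀ i, 0 < pdiam w (U i) ∧ pdiam w (U i) ≤ ENNReal.ofReal ρ) →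
      Hw w s (E ∩ ⋃ i, U i) < (∑' i, pdiam w (U i) ^ s) + ENNReal.ofReal ε :=
  stmt8_general A w hw s hs E hfin ε hε
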